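/- arXiv:2101.08007 — 2 statements merged into one kernel-verified Lean document; each statement's English description precedes it below -/
import Mathlib

section
/- Suppose π = 1/2, x′ = 1−x, z′ = 1−z, x ≤ 1/2 and z ≤ 1/2. If y₁ − y₂ ≥ y₄ − y₃ ≥ 0, then RD_crude ≤ RD_obs ≤ RD_true; and if y₁ − y₂ ≤ y₄ − y₃ ≤ 0, then RD_crude ≥ RD_obs ≥ RD_true. (Paper's Corollary 2.) -/
/-!
With the flat prior `π = 1/2` and the mirrored choices `x' = 1 - x`, `z' = 1 - z`, all three risk
differences are the same affine function `w ↦ (y₁ - y₄) w + (y₂ - y₃) (1 - w)` of a weight `w`: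
`w = P(c|a) = x` for the crude contrast, `w = π = 1/2` for the true one, and
`w = (P(c|a,d) + P(c|a,d̄)) / 2` for the `D`-adjusted one, because `P(c|ā,d) = 1 - P(c|a,d̄)`,
`P(c|ā,d̄) = 1 - P(c|a,d)` and `P(d) = 1/2`. The slope in `w` is `(y₁ - y₂) - (y₄ - y₃)`, so both
orderings follow from `x ≤ (P(c|a,d) + P(c|a,d̄)) / 2 ≤ 1/2`.
-/

theorem half_prior_posterior (a b : ℝ) :
    a * (1 / 2) / (a * (1 / 2) + b * (1 - 1 / 2)) = a / (a + b) := by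
  rw [show (1 : ℝ) - 1 / 2 = 1 / 2 by norm_num, ← add_mul, mul_div_mul_right _ _ (by norm_num)]

theorem div_add_comm_eq_one_sub {a b : ℝ} (h : a + b ≠ 0) : b / (b + a) = 1 - a / (a + b) := by
  rw [add_comm b, eq_sub_iff_add_eq, ← add_div, add_comm b, div_self h]

noncomputable def adjustedWeight (x z : ℝ) : ℝ :=
  (x * z / (x * z + (1 - x) * (1 - z)) + x * (1 - z) / (x * (1 - z) + (1 - x) * z)) / 2

theorem adjustedWeight_mem_Icc {x z : ℝ} (hx0 : 0 ≤ x) (hx : x ≤ 1 / 2) (hz0 : 0 < z)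
    (hz1 : z < 1) : adjustedWeight x z ∈ Set.Icc x (1 / 2) := by
  have h1x : 0 ≤ 1 - x := by linarith
  have h2x : 0 ≤ 1 - 2 * x := by linarith
  have h1z : 0 < 1 - z := by linarith
  have hD₁ : 0 < x * z + (1 - x) * (1 - z) := by nlinarith
  have hD₂ : 0 < x * (1 - z) + (1 - x) * z := by nlinarith
  rw [adjustedWeight, div_add_div _ _ hD₁.ne' hD₂.ne', div_div]
  -- Over the common denominator `2 D₁ D₂`, the gaps to `x` and to `1/2` have numerators
  -- `x (1 - x) (1 - 2x) (1 - 2z)²` and `z (1 - z) (1 - 2x)`.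
  constructor
  · rw [le_div_iff₀ (by positivity)]
    have : 0 ≤ x * (1 - x) * (1 - 2 * x) * (1 - 2 * z) ^ 2 := by positivity
    linarith
  · rw [div_le_iff₀ (by positivity)]
    have : 0 ≤ z * (1 - z) * (1 - 2 * x) := by positivity
    linarith

theorem monotone_mul_add_mul_one_sub {u v : ℝ} (h : v ≤ u) :
    Monotone fun w : ℝ => u * w + v * (1 - w) :=
  fun _ _ hw => by nlinarith

theorem antitone_mul_add_mul_one_sub {u v : ℝ} (h : u ≤ v) :
    Antitone fun w : ℝ => u * w + v * (1 - w) :=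
  fun _ _ hw => by nlinarith

theorem cor2_general (pc x x' z z' : ℝ) (y₁ y₂ y₃ y₄ : ℝ)
    (hx0 : 0 < x)
    (hz0 : 0 < z) (hz1 : z < 1)
    (hpch : pc = 1/2) (hx' : x' = 1 - x) (hz' : z' = 1 - z)
    (hxle : x ≤ 1/2)
    (Pca Pcab Pd Pcad Pcadb Pcbd Pcbdb EYad EYadb EYbd EYbdb RDtrue RDcrude RDobs : ℝ)
    (hPca : Pca = x*pc/(x*pc + x'*(1-pc)))
    (hPcab : Pcab = (1-x)*pc/((1-x)*pc + (1-x')*(1-pc)))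
    (hPd : Pd = z*pc + z'*(1-pc))
    (hPcad : Pcad = x*z*pc/(x*z*pc + x'*z'*(1-pc)))
    (hPcadb : Pcadb = x*(1-z)*pc/(x*(1-z)*pc + x'*(1-z')*(1-pc)))
    (hPcbd : Pcbd = (1-x)*z*pc/((1-x)*z*pc + (1-x')*z'*(1-pc)))
    (hPcbdb : Pcbdb = (1-x)*(1-z)*pc/((1-x)*(1-z)*pc + (1-x')*(1-z')*(1-pc)))
    (hEYad : EYad = y₁*Pcad + y₂*(1-Pcad))
    (hEYadb : EYadb = y₁*Pcadb + y₂*(1-Pcadb))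
    (hEYbd : EYbd = y₃*Pcbd + y₄*(1-Pcbd))
    (hEYbdb : EYbdb = y₃*Pcbdb + y₄*(1-Pcbdb))
    (hRDtrue : RDtrue = (y₁-y₃)*pc + (y₂-y₄)*(1-pc))
    (hRDcrude : RDcrude = (y₁*Pca + y₂*(1-Pca)) - (y₃*Pcab + y₄*(1-Pcab)))
    (hRDobs : RDobs = (EYad - EYbd)*Pd + (EYadb - EYbdb)*(1-Pd))
    :
    (y₁ - y₂ ≥ y₄ - y₃ ∧ y₄ - y₃ ≥ 0 → RDcrude ≤ RDobs ∧ RDobs ≤ RDtrue) ∧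
    (y₁ - y₂ ≤ y₄ - y₃ ∧ y₄ - y₃ ≤ 0 → RDcrude ≥ RDobs ∧ RDobs ≥ RDtrue) := by
  subst hpch hx' hz'
  simp only [half_prior_posterior, sub_sub_cancel, add_sub_cancel, sub_add_cancel, div_one]
    at hPca hPcab hPcad hPcadb hPcbd hPcbdb
  have hD₁ : x * z + (1 - x) * (1 - z) ≠ 0 := by nlinarith
  have hD₂ : x * (1 - z) + (1 - x) * z ≠ 0 := by nlinarith
  rw [div_add_comm_eq_one_sub hD₂] at hPcbd
  rw [div_add_comm_eq_one_sub hD₁] at hPcbdb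
  have hcrude : RDcrude = (y₁ - y₄) * x + (y₂ - y₃) * (1 - x) := by
    rw [hRDcrude, hPca, hPcab]; ring
  have hobs : RDobs =
      (y₁ - y₄) * adjustedWeight x z + (y₂ - y₃) * (1 - adjustedWeight x z) := by
    rw [hRDobs, hEYad, hEYadb, hEYbd, hEYbdb, hPcbd, hPcbdb, hPcad, hPcadb, hPd, adjustedWeight]
    ring
  have htrue : RDtrue = (y₁ - y₄) * (1 / 2) + (y₂ - y₃) * (1 - 1 / 2) := by
    rw [hRDtrue]; ring
  obtain ⟨hlo, hhi⟩ := adjustedWeight_mem_Icc hx0.le hxle hz0 hz1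
  rw [hcrude, hobs, htrue]
  constructor
  · rintro ⟨hy, -⟩
    have hmono := monotone_mul_add_mul_one_sub (u := y₁ - y₄) (v := y₂ - y₃) (by linarith)
    exact ⟨hmono hlo, hmono hhi⟩
  · rintro ⟨hy, -⟩
    have hanti := antitone_mul_add_mul_one_sub (u := y₁ - y₄) (v := y₂ - y₃) (by linarith)
    exact ⟨hanti hlo, hanti hhi⟩

theorem cor2 (pc x x' z z' : ℝ) (y₁ y₂ y₃ y₄ : ℝ)
    (hpc : 0 < pc) (hpc1 : pc < 1)
    (hx0 : 0 < x) (hx1 : x < 1) (hx'0 : 0 < x') (hx'1 : x' < 1)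
    (hz0 : 0 < z) (hz1 : z < 1) (hz'0 : 0 < z') (hz'1 : z' < 1)
    (hpch : pc = 1/2) (hx' : x' = 1 - x) (hz' : z' = 1 - z)
    (hxle : x ≤ 1/2) (hzle : z ≤ 1/2)
    (Pca Pcab Pd Pcad Pcadb Pcbd Pcbdb EYad EYadb EYbd EYbdb RDtrue RDcrude RDobs : ℝ)
    (hPca : Pca = x*pc/(x*pc + x'*(1-pc)))
    (hPcab : Pcab = (1-x)*pc/((1-x)*pc + (1-x')*(1-pc)))
    (hPd : Pd = z*pc + z'*(1-pc))
    (hPcad : Pcad = x*z*pc/(x*z*pc + x'*z'*(1-pc)))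
    (hPcadb : Pcadb = x*(1-z)*pc/(x*(1-z)*pc + x'*(1-z')*(1-pc)))
    (hPcbd : Pcbd = (1-x)*z*pc/((1-x)*z*pc + (1-x')*z'*(1-pc)))
    (hPcbdb : Pcbdb = (1-x)*(1-z)*pc/((1-x)*(1-z)*pc + (1-x')*(1-z')*(1-pc)))
    (hEYad : EYad = y₁*Pcad + y₂*(1-Pcad))
    (hEYadb : EYadb = y₁*Pcadb + y₂*(1-Pcadb))
    (hEYbd : EYbd = y₃*Pcbd + y₄*(1-Pcbd))
    (hEYbdb : EYbdb = y₃*Pcbdb + y₄*(1-Pcbdb))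
    (hRDtrue : RDtrue = (y₁-y₃)*pc + (y₂-y₄)*(1-pc))
    (hRDcrude : RDcrude = (y₁*Pca + y₂*(1-Pca)) - (y₃*Pcab + y₄*(1-Pcab)))
    (hRDobs : RDobs = (EYad - EYbd)*Pd + (EYadb - EYbdb)*(1-Pd))
    :
    (y₁ - y₂ ≥ y₄ - y₃ ∧ y₄ - y₃ ≥ 0 → RDcrude ≤ RDobs ∧ RDobs ≤ RDtrue) ∧
    (y₁ - y₂ ≤ y₄ - y₃ ∧ y₄ - y₃ ≤ 0 → RDcrude ≥ RDobs ∧ RDobs ≥ RDtrue) :=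
  cor2_general pc x x' z z' y₁ y₂ y₃ y₄ hx0 hz0 hz1 hpch hx' hz' hxle Pca Pcab Pd Pcad Pcadb Pcbd
    Pcbdb EYad EYadb EYbd EYbdb RDtrue RDcrude RDobs hPca hPcab hPd hPcad hPcadb hPcbd hPcbdb hEYad
    hEYadb hEYbd hEYbdb hRDtrue hRDcrude hRDobs
end

section
/- Suppose π = 1/2, 1−x′ ≥ x ≥ 1/2 (i.e. P(A=ā|C=c̄) ≥ P(A=a|C=c) ≥ 1/2) and 1−z′ ≥ z ≥ 1/2 (i.e. P(D=d̄|C=c̄) ≥ P(D=d|C=c) ≥ 1/2). If y₁ − y₂ ≥ y₄ − y₃ ≥ 0, then RD_crude ≥ RD_true and RD_obs ≥ RD_true; and if y₁ − y₂ ≤ y₄ − y₃ ≤ 0, then RD_crude ≤ RD_true and RD_obs ≤ RD_true. (Paper's Theorem 9.) -/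
/-!
With `P(c) = 1/2`, both `RD_crude - RD_true` and `RD_obs - RD_true` have the form
`(y₁ - y₂) (p - 1/2) + (y₄ - y₃) (q - 1/2)`, where `p` and `q` are the probabilities of `c`
given `a` and given `ā` (crude, or averaged over the strata of `D`). Rewritten as
`(y₁ - y₂ - (y₄ - y₃)) (p - 1/2) + (y₄ - y₃) (p + q - 1)`, its sign is that of `y₄ - y₃` as soon
as `p ≥ 1/2` and `p + q ≥ 1`.

Since `x ≥ x'`, every stratum has `P(c | a, D) ≥ P(c | D)`, and averaging `P(c | D)` over the
strata gives `P(c) = 1/2`; hence `p ≥ 1/2`. In a stratum with `w = P(d | c)`, `w' = P(d | c̄)`, the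
difference `P(c | a, d) - P(c̄ | ā, d)` has numerator `x (1 - x) w² - x' (1 - x') w'²`, and
`x (1 - x) ≥ x' (1 - x')` because `x' ≤ x ≤ 1 - x'`. This gives `p + q ≥ 1` in the crude case;
with strata, the possibly negative contribution of `d̄` is outweighed by that of `d`, as an
explicit decomposition of the cleared numerator into nonnegative terms shows.
-/

/-- The probability of `c` given an event of joint weights `p` with `c` and `q` with `c̄`. -/
noncomputable def posterior (p q : ℝ) : ℝ := p / (p + q)

lemma posterior_of_uniform_prior (p q : ℝ) :
    p * (1/2) / (p * (1/2) + q * (1 - 1/2)) = posterior p q := by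
  rw [posterior, show p * (1/2) + q * (1 - 1/2) = (p + q) * (1/2) by ring,
    mul_div_mul_right _ _ (by norm_num)]

lemma add_mul_posterior {p q : ℝ} (h : p + q ≠ 0) : (p + q) * posterior p q = p :=
  mul_div_cancel₀ p h

lemma half_le_posterior {p q : ℝ} (hq : 0 < q) (hqp : q ≤ p) : 1/2 ≤ posterior p q := by
  rw [posterior, le_div_iff₀ (by linarith)]
  linarith

lemma posterior_le_posterior_mul_mul {s s' w w' : ℝ} (hs' : 0 < s') (hs's : s' ≤ s)
    (hw : 0 ≤ w) (hw' : 0 ≤ w') (hww' : 0 < w + w') :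
    posterior w w' ≤ posterior (s * w) (s' * w') := by
  have hpos : 0 < s * w + s' * w' := by nlinarith
  rw [posterior, posterior, div_le_div_iff₀ hww' hpos]
  nlinarith [mul_nonneg (mul_nonneg (sub_nonneg.2 hs's) hw) hw']

lemma posterior_add_posterior_sub_one {p q p' q' : ℝ} (h : p + q ≠ 0) (h' : p' + q' ≠ 0) :
    posterior p q + posterior p' q' - 1 = (p * p' - q * q') / ((p + q) * (p' + q')) := by
  rw [posterior, posterior]
  field_simp
  ring

lemma one_le_posterior_add_posterior_one_sub {s s' : ℝ} (hs' : 0 < s') (hs's : s' ≤ s)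
    (hss' : s ≤ 1 - s') : 1 ≤ posterior s s' + posterior (1 - s) (1 - s') := by
  have hnum : 0 ≤ s * (1 - s) - s' * (1 - s') := by
    nlinarith [mul_nonneg (sub_nonneg.2 hs's) (sub_nonneg.2 hss')]
  have h := posterior_add_posterior_sub_one (p := s) (q := s') (p' := 1 - s) (q' := 1 - s')
    (by linarith) (by linarith)
  have : 0 ≤ (s * (1 - s) - s' * (1 - s')) / ((s + s') * (1 - s + (1 - s'))) :=
    div_nonneg hnum (mul_nonneg (by linarith) (by linarith))
  linarith

lemma mul_div_add_mul_div_nonneg {α β n n' d d' : ℝ} (hd : 0 < d) (hd' : 0 < d')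
    (h : 0 ≤ α * n * d' + β * n' * d) : 0 ≤ α * (n / d) + β * (n' / d') := by
  have e : α * (n / d) + β * (n' / d') = (α * n * d' + β * n' * d) / (d * d') := by
    field_simp
  rw [e]
  exact div_nonneg h (mul_pos hd hd').le

/-- `∑_d P(d) P(c | ·, d)` when `P(c) = 1/2`, `P(· | c) = s`, `P(· | c̄) = s'`, `P(d | c) = z` and
`P(d | c̄) = z'`. -/
noncomputable def adjustedPosterior (s s' z z' : ℝ) : ℝ :=
  (z + z') / 2 * posterior (s * z) (s' * z') +
    (1 - (z + z') / 2) * posterior (s * (1 - z)) (s' * (1 - z'))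

lemma half_le_adjustedPosterior {s s' z z' : ℝ} (hs' : 0 < s') (hs's : s' ≤ s)
    (hz : 0 ≤ z) (hz' : 0 < z') (hzz' : z ≤ 1 - z') : 1/2 ≤ adjustedPosterior s s' z z' := by
  have hd : posterior z z' ≤ posterior (s * z) (s' * z') :=
    posterior_le_posterior_mul_mul hs' hs's hz hz'.le (by linarith)
  have hd' : posterior (1 - z) (1 - z') ≤ posterior (s * (1 - z)) (s' * (1 - z')) :=
    posterior_le_posterior_mul_mul hs' hs's (by linarith) (by linarith) (by linarith)
  have hc : (z + z') * posterior z z' = z := add_mul_posterior (by linarith)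
  have hc' : (1 - z + (1 - z')) * posterior (1 - z) (1 - z') = 1 - z :=
    add_mul_posterior (by linarith)
  rw [adjustedPosterior]
  nlinarith [mul_le_mul_of_nonneg_left hd (show 0 ≤ (z + z') / 2 by linarith),
    mul_le_mul_of_nonneg_left hd' (show 0 ≤ 1 - (z + z') / 2 by linarith)]

lemma stratified_numerator_nonneg {x x' z z' : ℝ} (hx' : 0 ≤ x') (hx : 1/2 ≤ x)
    (hxx' : x ≤ 1 - x') (hz' : 0 ≤ z') (hz'z : z' ≤ z) (hzz' : z ≤ 1 - z') :
    0 ≤ (z + z') / 2 * (x * z * ((1 - x) * z) - x' * z' * ((1 - x') * z')) *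
          ((x * (1 - z) + x' * (1 - z')) * ((1 - x) * (1 - z) + (1 - x') * (1 - z'))) +
        (1 - (z + z') / 2) *
          (x * (1 - z) * ((1 - x) * (1 - z)) - x' * (1 - z') * ((1 - x') * (1 - z'))) *
          ((x * z + x' * z') * ((1 - x) * z + (1 - x') * z')) := by
  have hxx : 0 ≤ x - x' := by linarith
  have hQ : 0 ≤ x' * (1 - x') := mul_nonneg hx' (by linarith)
  have hQP : x' * (1 - x') ≤ x * (1 - x) := by
    nlinarith [mul_nonneg hxx (show 0 ≤ 1 - x - x' by linarith)]
  have hv : 0 ≤ z' * (1 - z') := mul_nonneg hz' (by linarith)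
  have hvu : z' * (1 - z') ≤ z * (1 - z) := by
    nlinarith [mul_nonneg (sub_nonneg.2 hz'z) (show 0 ≤ 1 - z - z' by linarith)]
  have h2x : 2 * x - 1 ≤ 1 - 2 * x' := by linarith
  have hC : x' * (1 - x') * (2 * x - 1) ≤ x * (1 - x) * (1 - 2 * x') :=
    mul_le_mul hQP h2x (by linarith) (hQ.trans hQP)
  have hCu : x' * (1 - x') * (z' * (1 - z')) * (2 * x - 1) ≤
      x * (1 - x) * (z * (1 - z)) * (1 - 2 * x') :=
    mul_le_mul (mul_le_mul hQP hvu hv (hQ.trans hQP)) h2x (by linarith)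
      (mul_nonneg (hQ.trans hQP) (hv.trans hvu))
  have hM : 0 ≤ (1 - x - x') * (x * (1 - x') + x' * (1 - x)) :=
    mul_nonneg (by linarith)
      (add_nonneg (mul_nonneg (by linarith) (by linarith)) (mul_nonneg hx' (by linarith)))
  calc 0 ≤ (x - x') *
        (2 * (1 - x - x') *
            (x * (1 - x) * (z * (1 - z)) ^ 2 + x' * (1 - x') * (z' * (1 - z')) ^ 2) +
          (x * (1 - x) * (1 - 2 * x') - x' * (1 - x') * (2 * x - 1) +
            (1 - x - x') * (x * (1 - x') + x' * (1 - x))) * (z * (1 - z) * (z' * (1 - z'))) +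
          (x * (1 - x) * (z * (1 - z)) * (1 - 2 * x') -
            x' * (1 - x') * (z' * (1 - z')) * (2 * x - 1)) * (z - z') ^ 2) / 2 := by
        refine div_nonneg (mul_nonneg hxx (add_nonneg (add_nonneg ?_ ?_) ?_)) zero_le_two
        · exact mul_nonneg (by linarith)
            (add_nonneg (mul_nonneg (hQ.trans hQP) (sq_nonneg _)) (mul_nonneg hQ (sq_nonneg _)))
        · exact mul_nonneg (by linarith) (mul_nonneg (hv.trans hvu) hv)
        · exact mul_nonneg (by linarith) (sq_nonneg _)
    _ = _ := by ring

lemma one_le_adjustedPosterior_add {x x' z z' : ℝ} (hx' : 0 < x') (hx : 1/2 ≤ x)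
    (hxx' : x ≤ 1 - x') (hz' : 0 < z') (hz'z : z' ≤ z) (hzz' : z ≤ 1 - z') :
    1 ≤ adjustedPosterior x x' z z' + adjustedPosterior (1 - x) (1 - x') z z' := by
  have hd₁ : 0 < x * z + x' * z' := by nlinarith
  have hd₂ : 0 < (1 - x) * z + (1 - x') * z' := by nlinarith
  have hd₃ : 0 < x * (1 - z) + x' * (1 - z') := by nlinarith
  have hd₄ : 0 < (1 - x) * (1 - z) + (1 - x') * (1 - z') := by nlinarith
  have hstrata : adjustedPosterior x x' z z' + adjustedPosterior (1 - x) (1 - x') z z' - 1 =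
      (z + z') / 2 * (posterior (x * z) (x' * z') + posterior ((1 - x) * z) ((1 - x') * z') - 1) +
      (1 - (z + z') / 2) * (posterior (x * (1 - z)) (x' * (1 - z')) +
        posterior ((1 - x) * (1 - z)) ((1 - x') * (1 - z')) - 1) := by
    rw [adjustedPosterior, adjustedPosterior]
    ring
  rw [← sub_nonneg, hstrata, posterior_add_posterior_sub_one hd₁.ne' hd₂.ne',
    posterior_add_posterior_sub_one hd₃.ne' hd₄.ne']
  exact mul_div_add_mul_div_nonneg (mul_pos hd₁ hd₂) (mul_pos hd₃ hd₄)
    (stratified_numerator_nonneg hx'.le hx hxx' hz'.le hz'z hzz')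

lemma sign_of_bias {a b p q : ℝ} (hp : 1/2 ≤ p) (hpq : 1 ≤ p + q) :
    (b ≤ a ∧ 0 ≤ b → 0 ≤ a * (p - 1/2) + b * (q - 1/2)) ∧
      (a ≤ b ∧ b ≤ 0 → a * (p - 1/2) + b * (q - 1/2) ≤ 0) := by
  have split : a * (p - 1/2) + b * (q - 1/2) = (a - b) * (p - 1/2) + b * (p + q - 1) := by ring
  refine ⟨fun ⟨hba, hb⟩ => ?_, fun ⟨hab, hb⟩ => ?_⟩ <;> rw [split]
  · exact add_nonneg (mul_nonneg (by linarith) (by linarith)) (mul_nonneg hb (by linarith))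
  · exact add_nonpos (mul_nonpos_of_nonpos_of_nonneg (by linarith) (by linarith))
      (mul_nonpos_of_nonpos_of_nonneg hb (by linarith))

theorem thm9_general (pc x x' z z' : ℝ) (y₁ y₂ y₃ y₄ : ℝ)
    (hx'0 : 0 < x')
    (hz'0 : 0 < z')
    (hpch : pc = 1/2)
    (hxx' : 1 - x' ≥ x) (hxge : x ≥ 1/2)
    (hzz' : 1 - z' ≥ z) (hzge : z ≥ 1/2)
    (Pca Pcab Pd Pcad Pcadb Pcbd Pcbdb EYad EYadb EYbd EYbdb RDtrue RDcrude RDobs : ℝ)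
    (hPca : Pca = x*pc/(x*pc + x'*(1-pc)))
    (hPcab : Pcab = (1-x)*pc/((1-x)*pc + (1-x')*(1-pc)))
    (hPd : Pd = z*pc + z'*(1-pc))
    (hPcad : Pcad = x*z*pc/(x*z*pc + x'*z'*(1-pc)))
    (hPcadb : Pcadb = x*(1-z)*pc/(x*(1-z)*pc + x'*(1-z')*(1-pc)))
    (hPcbd : Pcbd = (1-x)*z*pc/((1-x)*z*pc + (1-x')*z'*(1-pc)))
    (hPcbdb : Pcbdb = (1-x)*(1-z)*pc/((1-x)*(1-z)*pc + (1-x')*(1-z')*(1-pc)))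
    (hEYad : EYad = y₁*Pcad + y₂*(1-Pcad))
    (hEYadb : EYadb = y₁*Pcadb + y₂*(1-Pcadb))
    (hEYbd : EYbd = y₃*Pcbd + y₄*(1-Pcbd))
    (hEYbdb : EYbdb = y₃*Pcbdb + y₄*(1-Pcbdb))
    (hRDtrue : RDtrue = (y₁-y₃)*pc + (y₂-y₄)*(1-pc))
    (hRDcrude : RDcrude = (y₁*Pca + y₂*(1-Pca)) - (y₃*Pcab + y₄*(1-Pcab)))
    (hRDobs : RDobs = (EYad - EYbd)*Pd + (EYadb - EYbdb)*(1-Pd))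
    :
    (y₁ - y₂ ≥ y₄ - y₃ ∧ y₄ - y₃ ≥ 0 → RDcrude ≥ RDtrue ∧ RDobs ≥ RDtrue) ∧
    (y₁ - y₂ ≤ y₄ - y₃ ∧ y₄ - y₃ ≤ 0 → RDcrude ≤ RDtrue ∧ RDobs ≤ RDtrue) := by
  subst hpch
  simp only [posterior_of_uniform_prior] at hPca hPcab hPcad hPcadb hPcbd hPcbdb
  have crude : RDcrude - RDtrue = (y₁ - y₂) * (posterior x x' - 1/2) +
      (y₄ - y₃) * (posterior (1 - x) (1 - x') - 1/2) := by
    rw [hRDcrude, hRDtrue, hPca, hPcab]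
    ring
  have obs : RDobs - RDtrue = (y₁ - y₂) * (adjustedPosterior x x' z z' - 1/2) +
      (y₄ - y₃) * (adjustedPosterior (1 - x) (1 - x') z z' - 1/2) := by
    rw [hRDobs, hRDtrue, hEYad, hEYadb, hEYbd, hEYbdb, hPd, hPcad, hPcadb, hPcbd, hPcbdb,
      adjustedPosterior, adjustedPosterior]
    ring
  obtain ⟨crude_ge, crude_le⟩ := sign_of_bias (a := y₁ - y₂) (b := y₄ - y₃)
    (half_le_posterior hx'0 (by linarith))
    (one_le_posterior_add_posterior_one_sub hx'0 (by linarith) hxx')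
  obtain ⟨obs_ge, obs_le⟩ := sign_of_bias (a := y₁ - y₂) (b := y₄ - y₃)
    (half_le_adjustedPosterior hx'0 (by linarith) (by linarith) hz'0 hzz')
    (one_le_adjustedPosterior_add hx'0 hxge hxx' hz'0 (by linarith) hzz')
  exact ⟨fun h => ⟨by linarith [crude_ge h], by linarith [obs_ge h]⟩,
    fun h => ⟨by linarith [crude_le h], by linarith [obs_le h]⟩⟩

theorem thm9 (pc x x' z z' : ℝ) (y₁ y₂ y₃ y₄ : ℝ)
    (hpc : 0 < pc) (hpc1 : pc < 1)
    (hx0 : 0 < x) (hx1 : x < 1) (hx'0 : 0 < x') (hx'1 : x' < 1)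
    (hz0 : 0 < z) (hz1 : z < 1) (hz'0 : 0 < z') (hz'1 : z' < 1)
    (hpch : pc = 1/2)
    (hxx' : 1 - x' ≥ x) (hxge : x ≥ 1/2)
    (hzz' : 1 - z' ≥ z) (hzge : z ≥ 1/2)
    (Pca Pcab Pd Pcad Pcadb Pcbd Pcbdb EYad EYadb EYbd EYbdb RDtrue RDcrude RDobs : ℝ)
    (hPca : Pca = x*pc/(x*pc + x'*(1-pc)))
    (hPcab : Pcab = (1-x)*pc/((1-x)*pc + (1-x')*(1-pc)))
    (hPd : Pd = z*pc + z'*(1-pc))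
    (hPcad : Pcad = x*z*pc/(x*z*pc + x'*z'*(1-pc)))
    (hPcadb : Pcadb = x*(1-z)*pc/(x*(1-z)*pc + x'*(1-z')*(1-pc)))
    (hPcbd : Pcbd = (1-x)*z*pc/((1-x)*z*pc + (1-x')*z'*(1-pc)))
    (hPcbdb : Pcbdb = (1-x)*(1-z)*pc/((1-x)*(1-z)*pc + (1-x')*(1-z')*(1-pc)))
    (hEYad : EYad = y₁*Pcad + y₂*(1-Pcad))
    (hEYadb : EYadb = y₁*Pcadb + y₂*(1-Pcadb))
    (hEYbd : EYbd = y₃*Pcbd + y₄*(1-Pcbd))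
    (hEYbdb : EYbdb = y₃*Pcbdb + y₄*(1-Pcbdb))
    (hRDtrue : RDtrue = (y₁-y₃)*pc + (y₂-y₄)*(1-pc))
    (hRDcrude : RDcrude = (y₁*Pca + y₂*(1-Pca)) - (y₃*Pcab + y₄*(1-Pcab)))
    (hRDobs : RDobs = (EYad - EYbd)*Pd + (EYadb - EYbdb)*(1-Pd))
    :
    (y₁ - y₂ ≥ y₄ - y₃ ∧ y₄ - y₃ ≥ 0 → RDcrude ≥ RDtrue ∧ RDobs ≥ RDtrue) ∧
    (y₁ - y₂ ≤ y₄ - y₃ ∧ y₄ - y₃ ≤ 0 → RDcrude ≤ RDtrue ∧ RDobs ≤ RDtrue) :=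
  thm9_general pc x x' z z' y₁ y₂ y₃ y₄ hx'0 hz'0 hpch hxx' hxge hzz' hzge Pca Pcab Pd Pcad Pcadb
    Pcbd Pcbdb EYad EYadb EYbd EYbdb RDtrue RDcrude RDobs hPca hPcab hPd hPcad hPcadb hPcbd hPcbdb
    hEYad hEYadb hEYbd hEYbdb hRDtrue hRDcrude hRDobs
end
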